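/- If a graph G can be decomposed into p paths of length 8 and q cycles of length 8, then the tensor product G × H also admits a decomposition into paths of length 8 and cycles of length 8, for any simple graph H with at least one edge. -/

import Mathlib

open SimpleGraph Finset

/-- The tensor (categorical) product of two simple graphs. -/
def tensorProd {α β : Type*} (G : SimpleGraph α) (H : SimpleGraph β) :
    SimpleGraph (α × β) where
  Adj x y := G.Adj x.1 y.1 ∧ H.Adj x.2 y.2
  symm := ⟨fun _ _ h => ⟨h.1.symm, h.2.symm⟩⟩
  loopless := ⟨fun x h => G.irrefl h.1⟩

/-- The wreath (lexicographic) product of two simple graphs. -/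
def wreathProd {α β : Type*} (G : SimpleGraph α) (H : SimpleGraph β) :
    SimpleGraph (α × β) where
  Adj x y := G.Adj x.1 y.1 ∨ (x.1 = y.1 ∧ H.Adj x.2 y.2)
  symm := ⟨fun _ _ h =>
    h.elim (fun h1 => Or.inl h1.symm) (fun h2 => Or.inr ⟨h2.1.symm, h2.2.symm⟩)⟩
  loopless := ⟨fun x h => h.elim (fun h1 => G.irrefl h1) (fun h2 => H.irrefl h2.2)⟩

/-- The complete graph on `2*k` vertices minus the perfect matching pairing `2t` with `2t+1`. -/
def completeMinusF (k : ℕ) : SimpleGraph (Fin (2 * k)) where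
  Adj i j := i.val / 2 ≠ j.val / 2
  symm := ⟨fun _ _ h => h.symm⟩
  loopless := ⟨fun _ h => h rfl⟩

/-- An `(8; p, q)`-decomposition of the `l`-fold multigraph `G(l)`: `p` paths of length `8`
and `q` cycles of length `8` in `G` such that every edge of `G` is covered, counted with
multiplicity, exactly `l` times. -/
def IsDecomp8 {α : Type*} [DecidableEq α] (G : SimpleGraph α) (l p q : ℕ) : Prop :=
  ∃ (P : Fin p → Σ u v : α, G.Walk u v) (C : Fin q → Σ u : α, G.Walk u u),
    (∀ i, (P i).2.2.IsPath ∧ (P i).2.2.length = 8) ∧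
    (∀ j, (C j).2.IsCycle ∧ (C j).2.length = 8) ∧
    ∀ e ∈ G.edgeSet,
      ((∑ i, ((P i).2.2.edges.count e)) + ∑ j, ((C j).2.edges.count e)) = l

section Lift

set_option linter.unusedSectionVars false
variable {α β : Type*} [DecidableEq α] [DecidableEq β] {G : SimpleGraph α} {H : SimpleGraph β}

def lift : ∀ {u v : α}, G.Walk u v → ∀ (a b : β), H.Adj a b →
    Σ y : β, (tensorProd G H).Walk (u, a) (v, y)
  | _, _, .nil, a, _, _ => ⟨a, .nil⟩
  | _, _, .cons h w', a, b, hab =>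
    ⟨(lift w' b a hab.symm).1, .cons (show (tensorProd G H).Adj (_, a) (_, b) from And.intro h hab) (lift w' b a hab.symm).2⟩

lemma length_lift : ∀ {u v : α} (w : G.Walk u v) (a b : β) (hab : H.Adj a b),
    (lift w a b hab).2.length = w.length
  | _, _, .nil, a, b, hab => rfl
  | _, _, .cons h w', a, b, hab => by
    simp [lift, length_lift w' b a hab.symm]

lemma fst_lift : ∀ {u v : α} (w : G.Walk u v) (a b : β) (hab : H.Adj a b),
    (lift w a b hab).1 = if Even w.length then a else b
  | _, _, .nil, a, b, hab => by simp [lift]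
  | _, _, .cons h w', a, b, hab => by
    rw [lift, fst_lift w' b a hab.symm]
    by_cases hw : Even w'.length <;> simp [Nat.even_add_one, hw]

lemma support_lift : ∀ {u v : α} (w : G.Walk u v) (a b : β) (hab : H.Adj a b),
    (lift w a b hab).2.support.map Prod.fst = w.support
  | _, _, .nil, a, b, hab => rfl
  | _, _, .cons h w', a, b, hab => by
    simp [lift, support_lift w' b a hab.symm]

lemma edges_lift : ∀ {u v : α} (w : G.Walk u v) (a b : β) (hab : H.Adj a b),
    (lift w a b hab).2.edges.map (Sym2.map Prod.fst) = w.edges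
  | _, _, .nil, a, b, hab => rfl
  | _, _, .cons h w', a, b, hab => by
    simp [lift, edges_lift w' b a hab.symm]

lemma indicator_pair {g1 g2 u u' : α} {h1 h2 a b : β} (hg : u ≠ u') (hne : h1 ≠ h2)
    (hab : a ≠ b) :
    ((if (s((u,a),(u',b)) : Sym2 (α × β)) = s((g1,h1),(g2,h2)) then 1 else 0) +
      (if (s((u,b),(u',a)) : Sym2 (α × β)) = s((g1,h1),(g2,h2)) then 1 else 0) : ℕ) =
    if ((s(h1,h2) : Sym2 β) = s(a,b) ∧ (s(u,u') : Sym2 α) = s(g1,g2)) then 1 else 0 := by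
  by_cases hA : (s((u,a),(u',b)) : Sym2 (α × β)) = s((g1,h1),(g2,h2)) <;>
    by_cases hB : (s((u,b),(u',a)) : Sym2 (α × β)) = s((g1,h1),(g2,h2))
  · exfalso
    simp only [Sym2.eq_iff, Prod.mk.injEq] at hA hB
    rcases hA with ⟨⟨rfl,rfl⟩,rfl,rfl⟩|⟨⟨rfl,rfl⟩,rfl,rfl⟩ <;> simp_all
  · rw [if_pos hA, if_neg hB]
    simp only [Sym2.eq_iff, Prod.mk.injEq] at hA ⊢
    rcases hA with ⟨⟨rfl,rfl⟩,rfl,rfl⟩|⟨⟨rfl,rfl⟩,rfl,rfl⟩ <;> simp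
  · rw [if_neg hA, if_pos hB]
    simp only [Sym2.eq_iff, Prod.mk.injEq] at hB ⊢
    rcases hB with ⟨⟨rfl,rfl⟩,rfl,rfl⟩|⟨⟨rfl,rfl⟩,rfl,rfl⟩ <;> simp
  · rw [if_neg hA, if_neg hB, if_neg]
    rintro ⟨c1, c2⟩
    simp only [Sym2.eq_iff, Prod.mk.injEq] at c1 c2 hA hB
    rcases c1 with ⟨rfl,rfl⟩|⟨rfl,rfl⟩ <;> rcases c2 with ⟨rfl,rfl⟩|⟨rfl,rfl⟩ <;> simp_all

lemma count_pair : ∀ {u v : α} (w : G.Walk u v) (a b : β) (hab : H.Adj a b)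
    (g1 g2 : α) (h1 h2 : β) (hne : h1 ≠ h2),
    ((lift w a b hab).2.edges.count s((g1,h1),(g2,h2)) +
      (lift w b a hab.symm).2.edges.count s((g1,h1),(g2,h2))) =
    if (s(h1,h2) : Sym2 β) = s(a,b) then w.edges.count s(g1,g2) else 0
  | _, _, .nil, a, b, hab, g1, g2, h1, h2, hne => by simp [lift]
  | u, v, @Walk.cons _ _ _ m _ h w', a, b, hab, g1, g2, h1, h2, hne => by
    have IH := count_pair w' b a hab.symm g1 g2 h1 h2 hne
    have hind := indicator_pair (g1 := g1) (g2 := g2) (u := u) (u' := m)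
      (h1 := h1) (h2 := h2) h.ne hne hab.ne
    simp only [lift, Walk.edges_cons, List.count_cons, beq_iff_eq] at IH hind ⊢
    by_cases c1 : (s(h1,h2) : Sym2 β) = s(a,b)
    · have c1' : (s(h1,h2) : Sym2 β) = s(b,a) := c1.trans Sym2.eq_swap
      rw [if_pos c1'] at IH
      rw [if_pos c1]
      by_cases c2 : (s(u,m) : Sym2 α) = s(g1,g2)
      · have hc : (s(h1,h2) : Sym2 β) = s(a,b) ∧ (s(u,m) : Sym2 α) = s(g1,g2) := ⟨c1, c2⟩
        rw [if_pos hc] at hind; rw [if_pos c2]; omega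
      · rw [if_neg (fun hc : (s(h1,h2) : Sym2 β) = s(a,b) ∧ (s(u,m) : Sym2 α) = s(g1,g2) => c2 hc.2)] at hind; rw [if_neg c2]; omega
    · have c1' : ¬(s(h1,h2) : Sym2 β) = s(b,a) := fun hc => c1 (hc.trans Sym2.eq_swap)
      rw [if_neg c1'] at IH
      rw [if_neg (fun hc : (s(h1,h2) : Sym2 β) = s(a,b) ∧ (s(u,m) : Sym2 α) = s(g1,g2) => c1 hc.1)] at hind
      rw [if_neg c1]
      omega

end Lift

section More

set_option linter.unusedSectionVars false
variable {α β : Type*} [DecidableEq α] [DecidableEq β] {G : SimpleGraph α} {H : SimpleGraph β}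

lemma count_lift_zero {u v : α} (w : G.Walk u v) {a b : β} (hab : H.Adj a b)
    {g1 g2 : α} {h1 h2 : β} (hne : h1 ≠ h2)
    (hno : (s(h1,h2) : Sym2 β) ≠ s(a,b)) :
    (lift w a b hab).2.edges.count s((g1,h1),(g2,h2)) = 0 := by
  have := count_pair w a b hab g1 g2 h1 h2 hne
  rw [if_neg hno] at this
  omega

lemma sum_darts_count [Fintype H.Dart] {u v : α} (w : G.Walk u v)
    {x y : α × β} (hxy : (tensorProd G H).Adj x y) :
    ∑ d : H.Dart, (lift w d.fst d.snd d.adj).2.edges.count s(x, y) =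
      w.edges.count s(x.1, y.1) := by
  obtain ⟨x1, x2⟩ := x
  obtain ⟨y1, y2⟩ := y
  obtain ⟨hxy1, hxy2⟩ : G.Adj x1 y1 ∧ H.Adj x2 y2 := hxy
  have hne : x2 ≠ y2 := hxy2.ne
  set d1 : H.Dart := ⟨(x2, y2), hxy2⟩ with hd1
  set d2 : H.Dart := ⟨(y2, x2), hxy2.symm⟩ with hd2
  have hd12 : d1 ≠ d2 := by
    intro hcon
    rw [SimpleGraph.Dart.ext_iff, hd1, hd2, Prod.ext_iff] at hcon
    exact hne hcon.1
  rw [Finset.sum_eq_add_of_mem d1 d2 (Finset.mem_univ _) (Finset.mem_univ _) hd12 ?_]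
  · have := count_pair w x2 y2 hxy2 x1 y1 x2 y2 hne
    rw [if_pos rfl] at this
    exact this
  · intro d _ hd
    apply count_lift_zero w d.adj hne
    intro hcon
    rw [Sym2.eq_iff] at hcon
    rcases hcon with ⟨h1, h2⟩ | ⟨h1, h2⟩
    · exact hd.1 (by rw [SimpleGraph.Dart.ext_iff, hd1, Prod.ext_iff]; exact ⟨h1.symm, h2.symm⟩)
    · exact hd.2 (by rw [SimpleGraph.Dart.ext_iff, hd2, Prod.ext_iff]; exact ⟨h2.symm, h1.symm⟩)

lemma isPath_lift {u v : α} (w : G.Walk u v) (a b : β) (hab : H.Adj a b) (hw : w.IsPath) :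
    (lift w a b hab).2.IsPath := by
  have h2 : ((lift w a b hab).2.support.map Prod.fst).Nodup := by
    rw [support_lift]; exact hw.support_nodup
  exact SimpleGraph.Walk.IsPath.mk' (h2.of_map _)

lemma isCycle_lift {u : α} (w : G.Walk u u) (a b : β) (hab : H.Adj a b) (hw : w.IsCycle)
    (hy : ((u : α), (lift w a b hab).1) = (u, a)) :
    (((lift w a b hab).2).copy rfl hy).IsCycle := by
  refine ⟨⟨⟨?_⟩, ?_⟩, ?_⟩
  · rw [Walk.edges_copy]
    have h2 : ((lift w a b hab).2.edges.map (Sym2.map Prod.fst)).Nodup := by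
      rw [edges_lift]; exact hw.isCircuit.isTrail.edges_nodup
    exact h2.of_map _
  · intro hnil
    have h0 := hw.three_le_length
    have h1 := congrArg Walk.length hnil
    rw [Walk.length_copy, length_lift] at h1
    simp only [SimpleGraph.Walk.length_nil] at h1
    omega
  · rw [Walk.support_copy]
    have h2 : ((lift w a b hab).2.support.tail.map Prod.fst).Nodup := by
      rw [List.map_tail, support_lift]
      exact hw.support_nodup
    exact h2.of_map _

end More

theorem stmt_0 {α β : Type*} [Fintype α] [Fintype β] [DecidableEq α] [DecidableEq β]
    (G : SimpleGraph α) (H : SimpleGraph β) (p q : ℕ)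
    (hG : IsDecomp8 G 1 p q) (hH : H.edgeSet.Nonempty) :
    ∃ p' q' : ℕ, IsDecomp8 (tensorProd G H) 1 p' q' := by
  classical
  obtain ⟨P, C, hP, hC, hcount⟩ := hG
  have hfin : Finite H.Dart :=
    Finite.of_injective (fun d => d.toProd) (fun d1 d2 h => SimpleGraph.Dart.ext d1 d2 h)
  have hFT : Fintype H.Dart := Fintype.ofFinite _
  refine ⟨p * Fintype.card H.Dart, q * Fintype.card H.Dart, ?_⟩
  let eP : Fin p × H.Dart ≃ Fin (p * Fintype.card H.Dart) :=
    Fintype.equivFinOfCardEq (by simp)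
  let eC : Fin q × H.Dart ≃ Fin (q * Fintype.card H.Dart) :=
    Fintype.equivFinOfCardEq (by simp)
  let LP : Fin p × H.Dart → Σ u v : α × β, (tensorProd G H).Walk u v := fun x =>
    ⟨((P x.1).1, x.2.fst), ((P x.1).2.1, (lift (P x.1).2.2 x.2.fst x.2.snd x.2.adj).1),
      (lift (P x.1).2.2 x.2.fst x.2.snd x.2.adj).2⟩
  have hyC : ∀ (x : Fin q × H.Dart),
      (((C x.1).1 : α), (lift (C x.1).2 x.2.fst x.2.snd x.2.adj).1) = ((C x.1).1, x.2.fst) := by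
    intro x
    have hev : Even (C x.1).2.length := by rw [(hC x.1).2]; exact ⟨4, rfl⟩
    have h := fst_lift (C x.1).2 x.2.fst x.2.snd x.2.adj
    rw [if_pos hev] at h
    rw [h]
  let LC : Fin q × H.Dart → Σ u : α × β, (tensorProd G H).Walk u u := fun x =>
    ⟨((C x.1).1, x.2.fst), ((lift (C x.1).2 x.2.fst x.2.snd x.2.adj).2).copy rfl (hyC x)⟩
  refine ⟨fun i => LP (eP.symm i), fun j => LC (eC.symm j), ?_, ?_, ?_⟩
  · intro i
    refine ⟨isPath_lift _ _ _ _ (hP _).1, ?_⟩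
    rw [length_lift, (hP _).2]
  · intro j
    refine ⟨isCycle_lift _ _ _ _ (hC _).1 _, ?_⟩
    show (Walk.copy _ rfl _).length = 8
    rw [Walk.length_copy, length_lift, (hC _).2]
  · intro e he
    induction e using Sym2.ind with
    | _ x y =>
      rw [SimpleGraph.mem_edgeSet] at he
      have gP : (∑ i : Fin (p * Fintype.card H.Dart),
            ((LP (eP.symm i)).2.2.edges.count s(x,y))) =
          ∑ z : Fin p × H.Dart, ((LP z).2.2.edges.count s(x,y)) :=
        Fintype.sum_equiv eP.symm _ _ (fun i => rfl)
      have gC : (∑ j : Fin (q * Fintype.card H.Dart),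
            ((LC (eC.symm j)).2.edges.count s(x,y))) =
          ∑ z : Fin q × H.Dart, ((LC z).2.edges.count s(x,y)) :=
        Fintype.sum_equiv eC.symm _ _ (fun j => rfl)
      have h1 : ∀ j : Fin p, (∑ d : H.Dart, ((LP (j, d)).2.2.edges.count s(x,y))) =
          (P j).2.2.edges.count s(x.1, y.1) := by
        intro j
        have step : (∑ d : H.Dart, ((LP (j, d)).2.2.edges.count s(x,y))) =
            ∑ d : H.Dart, ((lift (P j).2.2 d.fst d.snd d.adj).2.edges.count s(x,y)) :=
          Finset.sum_congr rfl (fun d _ => rfl)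
        rw [step]
        exact sum_darts_count _ he
      have h2 : ∀ j : Fin q, (∑ d : H.Dart, ((LC (j, d)).2.edges.count s(x,y))) =
          (C j).2.edges.count s(x.1, y.1) := by
        intro j
        have step : (∑ d : H.Dart, ((LC (j, d)).2.edges.count s(x,y))) =
            ∑ d : H.Dart, ((lift (C j).2 d.fst d.snd d.adj).2.edges.count s(x,y)) := by
          refine Finset.sum_congr rfl (fun d _ => ?_)
          show ((lift (C j).2 d.fst d.snd d.adj).2.copy rfl _).edges.count s(x,y) = _
          rw [Walk.edges_copy]
        rw [step]
        exact sum_darts_count _ he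
      show (∑ i : Fin (p * Fintype.card H.Dart),
            ((LP (eP.symm i)).2.2.edges.count s(x,y))) +
          (∑ j : Fin (q * Fintype.card H.Dart),
            ((LC (eC.symm j)).2.edges.count s(x,y))) = 1
      rw [gP, gC, Fintype.sum_prod_type, Fintype.sum_prod_type]
      simp only [h1, h2]
      exact hcount s(x.1, y.1) ((SimpleGraph.mem_edgeSet G).mpr (show G.Adj x.1 y.1 ∧ H.Adj x.2 y.2 from he).1)
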